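/- arXiv:1209.4837 — 3 statements merged into one kernel-verified Lean document; each statement's English description precedes it below -/
import Mathlib

section
/- For every n ≥ 3, the polynomial [X_{Γ_n}](T) = ∑_{k=1}^{n} C(n,k) T^{k−1} − (T^{n−1} + (n−1)T^{n−2} + ∑_{k=0}^{n−3} (−1)^{n−1−k} T^k) has all coefficients non-negative. -/
open Polynomial

/-- The Grothendieck class of the banana-graph hypersurface, `[ℙ^{n-1}] - [Y_{Γ_n}]`,
written as a polynomial in `T`, has all coefficients non-negative. -/
theorem stmt_13 (n : ℕ) (hn : 3 ≤ n) (k : ℕ) :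
    0 ≤ ((∑ j ∈ Finset.range n, C (n.choose (j + 1) : ℤ) * (X : Polynomial ℤ) ^ j)
        - ((X : Polynomial ℤ) ^ (n - 1) + C ((n : ℤ) - 1) * X ^ (n - 2)
            + ∑ j ∈ Finset.range (n - 2), C ((-1 : ℤ) ^ (n - 1 - j)) * X ^ j)).coeff k := by
  simp only [Polynomial.coeff_sub, Polynomial.coeff_add, Polynomial.finset_sum_coeff,
    Polynomial.coeff_C_mul, Polynomial.coeff_X_pow, mul_ite, mul_one, mul_zero,
    Finset.sum_ite_eq, Finset.mem_range]
  have hc : k < n → (1:ℤ) ≤ (n.choose (k+1) : ℤ) := fun h => by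
    exact_mod_cast Nat.choose_pos (by omega)
  have hm1 : k = n - 2 → (n.choose (k+1) : ℤ) = n := fun h => by
    subst h
    have h2 : n - 2 + 1 = n - 1 := by omega
    have h3 : n - (n-1) = 1 := by omega
    rw [h2, ← Nat.choose_symm (by omega : n - 1 ≤ n), h3, Nat.choose_one_right]
  have hm2 : k = n - 1 → (n.choose (k+1) : ℤ) = 1 := fun h => by
    subst h
    have : n - 1 + 1 = n := by omega
    rw [this, Nat.choose_self, Nat.cast_one]
  have hpow : ((-1:ℤ)^(n-1-k)) ≤ 1 := by
    rcases Nat.even_or_odd (n-1-k) with he | ho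
    · rw [he.neg_one_pow]
    · rw [ho.neg_one_pow]; norm_num
  split_ifs <;>
    first
      | (exfalso; omega)
      | (rw [hm1 (by omega)]; push_cast; omega)
      | (rw [hm2 (by omega)]; push_cast; omega)
      | (have := hc (by omega); linarith)
      | (push_cast; omega)
      | norm_num
end

section
/- Define transformations on polynomials: given G ∈ ℚ[T], set χ(T) = (T·G(T−1) − G(0))/(T−1), and given χ ∈ ℚ[T], set G(T) = (T·χ(T+1) + χ(0))/(T+1). Then these two transformations are inverse to each other on the space of polynomials: applying the first and then the second (or vice versa) recovers the original polynomial. -/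
open Polynomial

private lemma Xp1_ne : (X + 1 : Polynomial ℚ) ≠ 0 := by
  intro h
  have := congrArg (eval 1) h
  simp at this

private lemma Xm1_ne : (X - 1 : Polynomial ℚ) ≠ 0 := by
  intro h
  have := congrArg (eval 0) h
  simp at this

/-- Aluffi's transformations `G ↦ χ`, `χ(T) = (T·G(T-1) - G(0))/(T-1)`, and `χ ↦ G`,
`G(T) = (T·χ(T+1) + χ(0))/(T+1)`, are well defined on polynomials (the numerators are
divisible by `T-1`, resp. `T+1`) and are inverse to each other. -/
theorem stmt_14 :
    (∀ G : Polynomial ℚ, (X - 1) ∣ (X * (G.comp (X - 1)) - C (G.eval 0))) ∧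
    (∀ χ : Polynomial ℚ, (X + 1) ∣ (X * (χ.comp (X + 1)) + C (χ.eval 0))) ∧
    (∀ G χ G' : Polynomial ℚ,
      (X - 1) * χ = X * (G.comp (X - 1)) - C (G.eval 0) →
      (X + 1) * G' = X * (χ.comp (X + 1)) + C (χ.eval 0) →
      G' = G) ∧
    (∀ χ G χ' : Polynomial ℚ,
      (X + 1) * G = X * (χ.comp (X + 1)) + C (χ.eval 0) →
      (X - 1) * χ' = X * (G.comp (X - 1)) - C (G.eval 0) →
      χ' = χ) := by
  refine ⟨?_, ?_, ?_, ?_⟩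
  · intro G
    have h : (X - C (1:ℚ)) ∣ (X * (G.comp (X - 1)) - C (G.eval 0)) := by
      rw [dvd_iff_isRoot]
      simp [IsRoot, eval_comp]
    simpa using h
  · intro χ
    have h : (X - C (-1:ℚ)) ∣ (X * (χ.comp (X + 1)) + C (χ.eval 0)) := by
      rw [dvd_iff_isRoot]
      simp [IsRoot, eval_comp]
    have : (X - C (-1:ℚ)) = X + 1 := by simp
    rwa [this] at h
  · intro G χ G' h1 h2
    have hcomp := congrArg (fun p => p.comp (X + 1)) h1
    simp only [sub_comp, mul_comp, X_comp, C_comp, one_comp, add_sub_cancel_right,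
      comp_assoc] at hcomp
    have hX : ((X - 1 : Polynomial ℚ)).comp (X + 1) = X := by
      simp [sub_comp]
    rw [comp_X] at hcomp
    -- hcomp : X * χ.comp (X+1) = (X+1) * G - C (G.eval 0)
    have hχ0 : χ.eval 0 = G.eval 0 := by
      have := congrArg (eval 0) h1
      simp [eval_comp] at this
      linarith
    apply mul_left_cancel₀ Xp1_ne
    rw [h2, hχ0, hcomp]
    ring
  · intro χ G χ' h1 h2
    have hcomp := congrArg (fun p => p.comp (X - 1)) h1
    simp only [add_comp, mul_comp, X_comp, C_comp, one_comp, comp_assoc] at hcomp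
    rw [show ((X:Polynomial ℚ) - 1 + 1) = X by ring, comp_X] at hcomp
    have hG0 : G.eval 0 = χ.eval 0 := by
      have := congrArg (eval 0) h1
      simp [eval_comp] at this
      linarith
    apply mul_left_cancel₀ Xm1_ne
    rw [h2, hG0, hcomp]
    ring
end

section
/- Let G ∈ ℚ[T] and let χ(T) = (T·G(T−1) − G(0))/(T−1) be the associated hyperplane-section Euler characteristic polynomial. Define C(T) = (1+T)^n − G(T). Then C′(0) = n − (χ(1) − χ(0)). In other words, writing χ(1) − χ(0) = ∑_{k≥1} χ_k, the derivative of the CSM Feynman rule polynomial at 0 equals n minus the sum of the Euler characteristics of all positive-codimension general hyperplane sections. -/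
open Polynomial

/-- For `G ∈ ℚ[T]` with associated hyperplane-section Euler characteristic polynomial
`χ(T) = (T·G(T-1) - G(0))/(T-1)`, the CSM Feynman rule polynomial `C(T) = (1+T)^n - G(T)`
satisfies `C'(0) = n - (χ(1) - χ(0))`. -/
theorem stmt_15 (n : ℕ) (G χ : Polynomial ℚ)
    (hχ : (X - 1) * χ = X * (G.comp (X - 1)) - C (G.eval 0)) :
    (Polynomial.derivative ((1 + X) ^ n - G)).eval 0
      = (n : ℚ) - (χ.eval 1 - χ.eval 0) := by
  have h0 := congrArg (eval 0) hχ
  simp at h0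
  have h1 := congrArg (eval 1) (congrArg derivative hχ)
  simp [derivative_comp, eval_comp, derivative_mul, eval_mul] at h1
  have hg : (derivative G).eval 0 = χ.eval 1 - χ.eval 0 := by
    rw [h1]; linarith [h0]
  simp [derivative_pow, ← hg]
end
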